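/- Let G1=(V1,E1,ℓ1) and G2=(V2,E2,ℓ2) be finite acyclic labeled graphs with single-character vertex labels, and let v1∈V1, v2∈V2 with ℓ1(v1)=ℓ2(v2). Then L(v1,v2) = 1 + max({L(u1,u2) : (u1,v1)∈E1, (u2,v2)∈E2} ∪ {0}). -/

import Mathlib

open List Relation

section Defs

variable {V V1 V2 V3 α : Type*}

/-- A (directed) path: a nonempty list of vertices, consecutive ones joined by edges. -/
def IsPath (E : V → V → Prop) (p : List V) : Prop :=
  p ≠ [] ∧ p.Chain' E

/-- Paths ending at `v` (the set `P(v)`). -/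
def EndsAt (E : V → V → Prop) (v : V) (p : List V) : Prop :=
  IsPath E p ∧ p.getLast? = some v

/-- A path is left-maximal if its first vertex has no in-coming edges. -/
def LeftMax (E : V → V → Prop) (p : List V) : Prop :=
  ∀ w u, p.head? = some w → ¬ E u w

/-- A path is right-maximal if its last vertex has no out-going edges. -/
def RightMax (E : V → V → Prop) (p : List V) : Prop :=
  ∀ w u, p.getLast? = some w → ¬ E w u

/-- `Subseq(ℓ(P(v)))`: subsequences of label strings of paths ending at `v`. -/
def SubseqAt (E : V → V → Prop) (ℓ : V → α) (v : V) : Set (List α) :=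
  {z | ∃ p, EndsAt E v p ∧ z.Sublist (p.map ℓ)}

/-- `Subseq(ℓ(LMP(v)))`: subsequences of label strings of left-maximal paths ending at `v`. -/
def SubseqLM (E : V → V → Prop) (ℓ : V → α) (v : V) : Set (List α) :=
  {z | ∃ p, EndsAt E v p ∧ LeftMax E p ∧ z.Sublist (p.map ℓ)}

/-- `Subseq(G)`: subsequences of label strings of all paths of `G`. -/
def SubseqG (E : V → V → Prop) (ℓ : V → α) : Set (List α) :=
  {z | ∃ p, IsPath E p ∧ z.Sublist (p.map ℓ)}

/-- A graph is acyclic if no vertex lies on a nonempty cycle. -/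
def Acyclic (E : V → V → Prop) : Prop :=
  ∀ v, ¬ Relation.TransGen E v v

/-- The set `S_IC(v1,v2,v3)`. -/
def SIC (E1 : V1 → V1 → Prop) (ℓ1 : V1 → α) (E2 : V2 → V2 → Prop) (ℓ2 : V2 → α)
    (E3 : V3 → V3 → Prop) (ℓ3 : V3 → α) (v1 : V1) (v2 : V2) (v3 : V3) :
    Set (List α) :=
  {z | (∃ q, EndsAt E3 v3 q ∧ LeftMax E3 q ∧ (q.map ℓ3).Sublist z) ∧
       z ∈ SubseqAt E1 ℓ1 v1 ∧ z ∈ SubseqAt E2 ℓ2 v2}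

/-- Maximum length of a string in `S`, with `⊥` (= −∞) for `S = ∅`. -/
noncomputable def maxLen (S : Set (List α)) : WithBot ℕ :=
  sSup ((fun z : List α => (z.length : WithBot ℕ)) '' S)

/-- `L(v1,v2)`: the maximum length of a common subsequence (as a natural number). -/
noncomputable def Lval (E1 : V1 → V1 → Prop) (ℓ1 : V1 → α)
    (E2 : V2 → V2 → Prop) (ℓ2 : V2 → α) (v1 : V1) (v2 : V2) : ℕ :=
  sSup {n | ∃ z ∈ SubseqAt E1 ℓ1 v1 ∩ SubseqAt E2 ℓ2 v2, n = z.length}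

/-- `D(v1,v2,v3)`: the maximum length of a string in `S_IC(v1,v2,v3)`, `−∞` if empty. -/
noncomputable def Dval (E1 : V1 → V1 → Prop) (ℓ1 : V1 → α) (E2 : V2 → V2 → Prop) (ℓ2 : V2 → α)
    (E3 : V3 → V3 → Prop) (ℓ3 : V3 → α) (v1 : V1) (v2 : V2) (v3 : V3) : WithBot ℕ :=
  maxLen (SIC E1 ℓ1 E2 ℓ2 E3 ℓ3 v1 v2 v3)

end Defs

/-!
Dropping the last letter of a common subsequence `y ++ [a]` with `y ≠ []` leaves a common
subsequence of paths ending at in-neighbours `u1`, `u2` of `v1`, `v2`: `a` is matched at or before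
the last vertex, so `y` is matched strictly before it. Conversely, as `ℓ1 v1 = ℓ2 v2`, every common
subsequence at `(u1, u2)` extends by this letter along the edges into `v1`, `v2`. Acyclicity of `G1`
makes paths injective, so lengths are bounded by `|V1|` and every supremum is attained.
-/

namespace Acyclic

variable {V α : Type*} {E : V → V → Prop}

theorem nodup_of_isChain (hE : Acyclic E) {p : List V} (hp : p.IsChain E) : p.Nodup := by
  refine (hp.imp fun _ _ => TransGen.single).pairwise.imp ?_
  rintro a _ h rfl
  exact hE a h

theorem length_le_card_of_mem_subseqAt [Fintype V] (hE : Acyclic E) {ℓ : V → α} {v : V}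
    {z : List α} (hz : z ∈ SubseqAt E ℓ v) : z.length ≤ Fintype.card V := by
  obtain ⟨p, ⟨⟨-, hp⟩, -⟩, hzp⟩ := hz
  calc z.length ≤ (p.map ℓ).length := hzp.length_le
    _ = p.length := p.length_map ℓ
    _ ≤ Fintype.card V := (hE.nodup_of_isChain hp).length_le_card

end Acyclic

theorem List.Sublist.of_append_singleton {β : Type*} {l₁ l₂ : List β} {a b : β}
    (h : l₁ ++ [a] <+ l₂ ++ [b]) : l₁ <+ l₂ := by
  simpa using h.reverse.tail

section SubseqAt

variable {V α : Type*} {E : V → V → Prop} {ℓ : V → α}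

theorem singleton_endsAt (v : V) : EndsAt E v [v] :=
  ⟨⟨List.cons_ne_nil _ _, List.isChain_singleton v⟩, rfl⟩

theorem nil_mem_subseqAt (v : V) : [] ∈ SubseqAt E ℓ v :=
  ⟨[v], singleton_endsAt v, List.nil_sublist _⟩

theorem singleton_mem_subseqAt (v : V) : [ℓ v] ∈ SubseqAt E ℓ v :=
  ⟨[v], singleton_endsAt v, List.Sublist.refl _⟩

theorem EndsAt.append_singleton {u v : V} {p : List V} (hp : EndsAt E u p) (huv : E u v) :
    EndsAt E v (p ++ [v]) := by
  obtain ⟨⟨-, hchain⟩, hlast⟩ := hp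
  refine ⟨⟨by simp, hchain.append (List.isChain_singleton v) ?_⟩, List.getLast?_concat⟩
  simp_all

theorem EndsAt.exists_eq_append_singleton {v : V} {p : List V} (hp : EndsAt E v p) :
    ∃ q, p = q ++ [v] := List.getLast?_eq_some_iff.mp hp.2

theorem append_singleton_mem_subseqAt {u v : V} (huv : E u v) {z : List α}
    (hz : z ∈ SubseqAt E ℓ u) : z ++ [ℓ v] ∈ SubseqAt E ℓ v := by
  obtain ⟨p, hp, hzp⟩ := hz
  exact ⟨p ++ [v], hp.append_singleton huv, by simpa using hzp.append_right [ℓ v]⟩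

theorem exists_edge_of_append_singleton_mem_subseqAt {v : V} {z : List α} {a : α}
    (hz : z ++ [a] ∈ SubseqAt E ℓ v) (hz_ne : z ≠ []) :
    ∃ u, E u v ∧ z ∈ SubseqAt E ℓ u := by
  obtain ⟨p, hp, hzp⟩ := hz
  obtain ⟨q, rfl⟩ := hp.exists_eq_append_singleton
  have hzq : z <+ q.map ℓ := List.Sublist.of_append_singleton (by simpa using hzp)
  obtain ⟨u, hu⟩ : ∃ u, q.getLast? = some u := by
    cases q using List.reverseRecOn with
    | nil => exact absurd (List.sublist_nil.mp hzq) hz_ne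
    | append_singleton q u => exact ⟨u, List.getLast?_concat⟩
  obtain ⟨hchain_q, -, hjoin⟩ := List.isChain_append.mp hp.1.2
  exact ⟨u, hjoin u hu v rfl, q, ⟨⟨fun h => by simp [h] at hu, hchain_q⟩, hu⟩, hzq⟩

end SubseqAt

section Lval

variable {V1 V2 α : Type*} [Fintype V1] {E1 : V1 → V1 → Prop} {ℓ1 : V1 → α}
  {E2 : V2 → V2 → Prop} {ℓ2 : V2 → α}

theorem bddAbove_commonLengths (hE1 : Acyclic E1) (v1 : V1) (v2 : V2) :
    BddAbove {n | ∃ z ∈ SubseqAt E1 ℓ1 v1 ∩ SubseqAt E2 ℓ2 v2, n = z.length} := by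
  refine ⟨Fintype.card V1, ?_⟩
  rintro n ⟨z, ⟨hz, -⟩, rfl⟩
  exact hE1.length_le_card_of_mem_subseqAt hz

theorem length_le_Lval (hE1 : Acyclic E1) {v1 : V1} {v2 : V2} {z : List α}
    (hz : z ∈ SubseqAt E1 ℓ1 v1 ∩ SubseqAt E2 ℓ2 v2) : z.length ≤ Lval E1 ℓ1 E2 ℓ2 v1 v2 :=
  le_csSup (bddAbove_commonLengths hE1 v1 v2) ⟨z, hz, rfl⟩

theorem exists_length_eq_Lval (hE1 : Acyclic E1) (v1 : V1) (v2 : V2) :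
    ∃ z ∈ SubseqAt E1 ℓ1 v1 ∩ SubseqAt E2 ℓ2 v2, Lval E1 ℓ1 E2 ℓ2 v1 v2 = z.length :=
  Nat.sSup_mem (s := {n | ∃ z ∈ SubseqAt E1 ℓ1 v1 ∩ SubseqAt E2 ℓ2 v2, n = z.length})
    ⟨0, [], ⟨nil_mem_subseqAt v1, nil_mem_subseqAt v2⟩, rfl⟩
    (bddAbove_commonLengths hE1 v1 v2)

theorem Lval_le_card (hE1 : Acyclic E1) (v1 : V1) (v2 : V2) :
    Lval E1 ℓ1 E2 ℓ2 v1 v2 ≤ Fintype.card V1 := by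
  obtain ⟨z, ⟨hz, -⟩, hLz⟩ := exists_length_eq_Lval (ℓ2 := ℓ2) hE1 v1 v2
  exact hLz ▸ hE1.length_le_card_of_mem_subseqAt hz

theorem one_le_Lval (hE1 : Acyclic E1) {v1 : V1} {v2 : V2} (hlab : ℓ1 v1 = ℓ2 v2) :
    1 ≤ Lval E1 ℓ1 E2 ℓ2 v1 v2 :=
  length_le_Lval hE1 ⟨singleton_mem_subseqAt v1, hlab ▸ singleton_mem_subseqAt v2⟩

theorem Lval_succ_le (hE1 : Acyclic E1) {u1 v1 : V1} {u2 v2 : V2} (he1 : E1 u1 v1)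
    (he2 : E2 u2 v2) (hlab : ℓ1 v1 = ℓ2 v2) :
    Lval E1 ℓ1 E2 ℓ2 u1 u2 + 1 ≤ Lval E1 ℓ1 E2 ℓ2 v1 v2 := by
  obtain ⟨z, ⟨hz1, hz2⟩, hLz⟩ := exists_length_eq_Lval hE1 u1 u2
  have hext : z ++ [ℓ1 v1] ∈ SubseqAt E1 ℓ1 v1 ∩ SubseqAt E2 ℓ2 v2 :=
    ⟨append_singleton_mem_subseqAt he1 hz1, hlab ▸ append_singleton_mem_subseqAt he2 hz2⟩
  simpa [hLz] using length_le_Lval hE1 hext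

theorem Lval_le_one_or_exists_edges (hE1 : Acyclic E1) (v1 : V1) (v2 : V2) :
    Lval E1 ℓ1 E2 ℓ2 v1 v2 ≤ 1 ∨ ∃ u1 u2, E1 u1 v1 ∧ E2 u2 v2 ∧
      Lval E1 ℓ1 E2 ℓ2 v1 v2 ≤ Lval E1 ℓ1 E2 ℓ2 u1 u2 + 1 := by
  obtain ⟨z, ⟨hz1, hz2⟩, hLz⟩ := exists_length_eq_Lval hE1 v1 v2
  rw [hLz]
  rcases List.eq_nil_or_concat z with rfl | ⟨y, a, rfl⟩
  · simp
  rcases eq_or_ne y [] with rfl | hy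
  · simp
  rw [List.concat_eq_append] at hz1 hz2
  obtain ⟨u1, he1, hy1⟩ := exists_edge_of_append_singleton_mem_subseqAt hz1 hy
  obtain ⟨u2, he2, hy2⟩ := exists_edge_of_append_singleton_mem_subseqAt hz2 hy
  exact .inr ⟨u1, u2, he1, he2, by simpa using length_le_Lval hE1 ⟨hy1, hy2⟩⟩

end Lval

theorem stmt1 {V1 V2 α : Type*} [Fintype V1]
    (E1 : V1 → V1 → Prop) (ℓ1 : V1 → α) (E2 : V2 → V2 → Prop) (ℓ2 : V2 → α)
    (h1 : Acyclic E1) (v1 : V1) (v2 : V2)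
    (hlab : ℓ1 v1 = ℓ2 v2) :
    Lval E1 ℓ1 E2 ℓ2 v1 v2 =
      1 + sSup (insert 0
        {n | ∃ u1 u2, E1 u1 v1 ∧ E2 u2 v2 ∧ n = Lval E1 ℓ1 E2 ℓ2 u1 u2}) := by
  set S := {n | ∃ u1 u2, E1 u1 v1 ∧ E2 u2 v2 ∧ n = Lval E1 ℓ1 E2 ℓ2 u1 u2}
  have hbdd : BddAbove (insert 0 S) := by
    refine ⟨Fintype.card V1, ?_⟩
    rintro n (rfl | ⟨u1, u2, -, -, rfl⟩)
    exacts [Nat.zero_le _, Lval_le_card h1 u1 u2]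
  apply le_antisymm
  · rcases Lval_le_one_or_exists_edges (ℓ1 := ℓ1) (E2 := E2) (ℓ2 := ℓ2) h1 v1 v2 with hle | ⟨u1, u2, he1, he2, hle⟩
    · omega
    · have : Lval E1 ℓ1 E2 ℓ2 u1 u2 ≤ sSup (insert 0 S) :=
        le_csSup hbdd (.inr ⟨u1, u2, he1, he2, rfl⟩)
      omega
  · rcases Nat.sSup_mem (Set.insert_nonempty 0 S) hbdd with h0 | ⟨u1, u2, he1, he2, hM⟩
    · simpa [h0] using one_le_Lval h1 hlab
    · rw [hM, add_comm]
      exact Lval_succ_le h1 he1 he2 hlab
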